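/- arXiv:1912.08859 — 6 statements merged into one kernel-verified Lean document; each statement's English description precedes it below -/
import Mathlib

section
/- Converting a source vertex of an acyclic orientation of a finite graph into a sink yields again an acyclic orientation. -/
/-!
After the flip, `s` is a sink, so no directed cycle can pass through `s`; away from `s` the
orientation is unchanged, so a directed cycle of the new orientation would already be one of `ω`.
-/

theorem Relation.not_transGen_of_forall_not {α : Type*} {r : α → α → Prop} {a : α}
    (h : ∀ x, ¬ r a x) (b : α) : ¬ Relation.TransGen r a b := fun hab =>
  let ⟨x, hax, _⟩ := Relation.TransGen.head'_iff.mp hab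
  h x hax

section reverseAt

variable {V : Type*} {ω : V → V → Prop} {s u v : V}

def reverseAt (ω : V → V → Prop) (s : V) (u v : V) : Prop :=
  ((u = s ∨ v = s) ∧ ω v u) ∨ (u ≠ s ∧ v ≠ s ∧ ω u v)

theorem reverseAt_iff_of_eq_or_eq (h : u = s ∨ v = s) : reverseAt ω s u v ↔ ω v u := by
  rcases h with rfl | rfl <;> simp [reverseAt]

theorem reverseAt_iff_of_ne (hu : u ≠ s) (hv : v ≠ s) : reverseAt ω s u v ↔ ω u v := by
  simp [reverseAt, hu, hv]

theorem not_reverseAt_of_isSource (hsource : ∀ v, ¬ ω v s) (v : V) : ¬ reverseAt ω s s v := by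
  rw [reverseAt_iff_of_eq_or_eq (Or.inl rfl)]
  exact hsource v

theorem SimpleGraph.adj_of_reverseAt (G : SimpleGraph V) (hsupp : ∀ u v, ω u v → G.Adj u v)
    (h : reverseAt ω s u v) : G.Adj u v := by
  by_cases hs : u = s ∨ v = s
  · exact (hsupp v u ((reverseAt_iff_of_eq_or_eq hs).mp h)).symm
  · obtain ⟨hu, hv⟩ := not_or.mp hs
    exact hsupp u v ((reverseAt_iff_of_ne hu hv).mp h)

theorem SimpleGraph.reverseAt_iff_not_reverseAt_swap (G : SimpleGraph V)
    (hchoice : ∀ u v, G.Adj u v → (ω u v ↔ ¬ ω v u)) (hadj : G.Adj u v) :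
    reverseAt ω s u v ↔ ¬ reverseAt ω s v u := by
  by_cases hs : u = s ∨ v = s
  · rw [reverseAt_iff_of_eq_or_eq hs, reverseAt_iff_of_eq_or_eq hs.symm]
    exact hchoice v u hadj.symm
  · obtain ⟨hu, hv⟩ := not_or.mp hs
    rw [reverseAt_iff_of_ne hu hv, reverseAt_iff_of_ne hv hu]
    exact hchoice u v hadj

theorem transGen_of_transGen_reverseAt (hsource : ∀ v, ¬ ω v s) {a b : V}
    (h : Relation.TransGen (reverseAt ω s) a b) (hb : b ≠ s) : Relation.TransGen ω a b := by
  have hsink := not_reverseAt_of_isSource hsource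
  have ne_of_rel {x y : V} (hxy : reverseAt ω s x y) : x ≠ s := by
    rintro rfl
    exact hsink y hxy
  induction h using Relation.TransGen.head_induction_on with
  | single hab => exact .single ((reverseAt_iff_of_ne (ne_of_rel hab) hb).mp hab)
  | @head a c hac hcb ih =>
    have hc : c ≠ s := by
      rintro rfl
      exact Relation.not_transGen_of_forall_not hsink b hcb
    exact .head ((reverseAt_iff_of_ne (ne_of_rel hac) hc).mp hac) ih

theorem not_transGen_reverseAt_self (hacyc : ∀ v, ¬ Relation.TransGen ω v v)
    (hsource : ∀ v, ¬ ω v s) (v : V) : ¬ Relation.TransGen (reverseAt ω s) v v := by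
  intro hv
  by_cases hvs : v = s
  · subst hvs
    exact Relation.not_transGen_of_forall_not (not_reverseAt_of_isSource hsource) v hv
  · exact hacyc v (transGen_of_transGen_reverseAt hsource hv hvs)

end reverseAt

theorem stmt_4_general {V : Type*} (G : SimpleGraph V)
    (ω : V → V → Prop)
    (hsupp : ∀ u v, ω u v → G.Adj u v)
    (hchoice : ∀ u v, G.Adj u v → (ω u v ↔ ¬ ω v u))
    (hacyc : ∀ v, ¬ Relation.TransGen ω v v)
    (s : V) (hsource : ∀ v, ¬ ω v s)
    (ω' : V → V → Prop)
    (hω' : ∀ u v, ω' u v ↔ ((u = s ∨ v = s) ∧ ω v u) ∨ (u ≠ s ∧ v ≠ s ∧ ω u v)) :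
    (∀ u v, ω' u v → G.Adj u v) ∧
    (∀ u v, G.Adj u v → (ω' u v ↔ ¬ ω' v u)) ∧
    (∀ v, ¬ Relation.TransGen ω' v v) := by
  obtain rfl : ω' = reverseAt ω s := funext₂ fun u v => propext (hω' u v)
  exact ⟨fun _ _ => G.adj_of_reverseAt hsupp, fun _ _ => G.reverseAt_iff_not_reverseAt_swap hchoice,
    not_transGen_reverseAt_self hacyc hsource⟩

/-- Converting a source vertex of an acyclic orientation of a finite graph into a
sink yields again an acyclic orientation.  An orientation of `G` is modeled as a
relation `ω` supported on the edges of `G`, choosing exactly one direction per edge;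
acyclicity means there is no directed cycle (no `v` with `TransGen ω v v`). -/
theorem stmt_4 {V : Type*} [Fintype V] (G : SimpleGraph V)
    (ω : V → V → Prop)
    (hsupp : ∀ u v, ω u v → G.Adj u v)
    (hchoice : ∀ u v, G.Adj u v → (ω u v ↔ ¬ ω v u))
    (hacyc : ∀ v, ¬ Relation.TransGen ω v v)
    (s : V) (hsource : ∀ v, ¬ ω v s)
    (ω' : V → V → Prop)
    (hω' : ∀ u v, ω' u v ↔ ((u = s ∨ v = s) ∧ ω v u) ∨ (u ≠ s ∧ v ≠ s ∧ ω u v)) :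
    (∀ u v, ω' u v → G.Adj u v) ∧
    (∀ u v, G.Adj u v → (ω' u v ↔ ¬ ω' v u)) ∧
    (∀ v, ¬ Relation.TransGen ω' v v) :=
  stmt_4_general G ω hsupp hchoice hacyc s hsource ω' hω'
end

section
/- For an acyclic orientation of a cycle graph C_n, the operation of converting a source vertex into a sink preserves the difference between the number of clockwise-oriented edges and the number of counterclockwise-oriented edges. -/
/-- The directed relation on the vertices `ZMod n` of the cycle graph `C_n` induced
by an orientation `o`, where `o i = true` means the edge `{i, i+1}` is oriented
clockwise, i.e. `i → i+1`, and `o i = false` means it is oriented counterclockwise. -/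
def cycleOrient (n : ℕ) (o : ZMod n → Bool) : ZMod n → ZMod n → Prop :=
  fun u v => (v = u + 1 ∧ o u = true) ∨ (u = v + 1 ∧ o v = false)

/-- Source-to-sink conversion at the vertex `s` of the cycle graph: reverse the two
edges `{s-1, s}` and `{s, s+1}` incident to `s`. -/
def flipAtSource (n : ℕ) (o : ZMod n → Bool) (s : ZMod n) : ZMod n → Bool :=
  fun i => if i = s ∨ i = s - 1 then !(o i) else o i

lemma card_filter_comp_equiv {α : Type*} [Fintype α] [DecidableEq α]
    (e : Equiv.Perm α) (p : α → Prop) [DecidablePred p] :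
    (Finset.univ.filter (fun i => p (e i))).card = (Finset.univ.filter p).card := by
  apply Finset.card_bij (fun a _ => e a)
  · intro a ha; simp at ha ⊢; exact ha
  · intro a _ b _ h; exact e.injective h
  · intro b hb; refine ⟨e.symm b, ?_, by simp⟩; simp at hb ⊢; exact hb

/-- For an acyclic orientation of the cycle graph `C_n` (`n ≥ 3`), converting a
source vertex into a sink preserves the difference between the number of
clockwise-oriented edges and the number of counterclockwise-oriented edges. -/
theorem stmt_5 (n : ℕ) [NeZero n] (hn : 3 ≤ n) (o : ZMod n → Bool) (s : ZMod n)
    (hacyc : ∀ v, ¬ Relation.TransGen (cycleOrient n o) v v)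
    (hsource : o (s - 1) = false ∧ o s = true) :
    ((Finset.univ.filter (fun i => flipAtSource n o s i = true)).card : ℤ)
        - ((Finset.univ.filter (fun i => flipAtSource n o s i = false)).card : ℤ)
      = ((Finset.univ.filter (fun i => o i = true)).card : ℤ)
        - ((Finset.univ.filter (fun i => o i = false)).card : ℤ) := by
  obtain ⟨h1, h2⟩ := hsource
  have hne : s ≠ s - 1 := by
    intro h
    have h10 : (1 : ZMod n) = 0 := by linear_combination h
    have : ((1 : ℕ) : ZMod n) = 0 := by simpa using h10
    rw [ZMod.natCast_eq_zero_iff] at this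
    have := Nat.le_of_dvd one_pos this
    omega
  have key : flipAtSource n o s = fun i => o (Equiv.swap s (s - 1) i) := by
    funext i
    simp only [flipAtSource, Equiv.swap_apply_def]
    by_cases hs : i = s
    · simp [hs, hne, h1, h2]
    · by_cases hs' : i = s - 1
      · simp [hs', hs, hne.symm, h1, h2]
      · simp [hs, hs']
  rw [key]
  rw [card_filter_comp_equiv (Equiv.swap s (s-1)) (fun i => o i = true),
      card_filter_comp_equiv (Equiv.swap s (s-1)) (fun i => o i = false)]
end

section
/- The toric equivalence classes of acyclic orientations of the complete graph K_n, where two orientations are equivalent if one is obtained from the other by a sequence of source-to-sink conversions, number exactly (n-1)!. -/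
/-- An acyclic orientation of the complete graph `K_n` on the vertex set `Fin n`. -/
def IsAcycOrientK (n : ℕ) (ω : Fin n → Fin n → Prop) : Prop :=
  (∀ u v : Fin n, u ≠ v → (ω u v ↔ ¬ ω v u)) ∧
    (∀ v : Fin n, ¬ ω v v) ∧
    (∀ v : Fin n, ¬ Relation.TransGen ω v v)

/-- `ω'` is obtained from `ω` by converting a source `s` (a vertex with no incoming
edges) into a sink, i.e. by reversing all edges incident to `s`. -/
def SourceToSinkStep (n : ℕ) (ω ω' : {ω : Fin n → Fin n → Prop // IsAcycOrientK n ω}) :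
    Prop :=
  ∃ s : Fin n, (∀ v, ¬ ω.1 v s) ∧
    ∀ u v, ω'.1 u v ↔ ((u = s ∨ v = s) ∧ ω.1 v u) ∨ (u ≠ s ∧ v ≠ s ∧ ω.1 u v)

/-!
An acyclic orientation of `K_n` is a tournament without cycles, hence a strict linear order on
the vertices, and ranking the vertices by their number of in-neighbours identifies the
orientations with the permutations `σ` of `Fin n` (`u → v` iff `σ u < σ v`). The unique source
is the vertex of rank `0`; converting it into a sink gives it the top rank and lowers every other
rank by one, so a conversion is `σ ↦ σ - 1` with ranks read in `Fin n` modulo `n`. Every class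
therefore contains exactly one permutation with `σ 0 = 0`, and there are `(n - 1)!` of those.
-/

open Equiv

abbrev AcycOrient (n : ℕ) : Type := {ω : Fin n → Fin n → Prop // IsAcycOrientK n ω}

namespace IsAcycOrientK

variable {n : ℕ} {ω : Fin n → Fin n → Prop} {u v w : Fin n}

theorem irrefl (h : IsAcycOrientK n ω) (v : Fin n) : ¬ ω v v := h.2.1 v

theorem rel_of_not_rel (h : IsAcycOrientK n ω) (huv : u ≠ v) (hn : ¬ ω u v) : ω v u := by
  by_contra hvu
  exact hn ((h.1 u v huv).mpr hvu)

theorem trans (h : IsAcycOrientK n ω) (huv : ω u v) (hvw : ω v w) : ω u w := by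
  have hpath := (Relation.TransGen.single huv).tail hvw
  have huw : u ≠ w := by
    rintro rfl
    exact h.2.2 u hpath
  by_contra hn
  exact h.2.2 u (hpath.tail (h.rel_of_not_rel huw hn))

noncomputable def rank (h : IsAcycOrientK n ω) (x : Fin n) : Fin n :=
  ⟨{y | ω y x}.ncard, by
    calc {y | ω y x}.ncard < (Set.univ : Set (Fin n)).ncard :=
          Set.ncard_lt_ncard <| Set.ssubset_univ_iff.mpr fun he =>
            h.irrefl x (he.ge (Set.mem_univ x))
      _ = n := by rw [Set.ncard_univ, Nat.card_eq_fintype_card, Fintype.card_fin]⟩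

theorem rank_lt_rank (h : IsAcycOrientK n ω) (huv : ω u v) : h.rank u < h.rank v := by
  refine Set.ncard_lt_ncard ⟨fun y hy => h.trans hy huv, fun hsub => h.irrefl u (hsub huv)⟩
    (Set.toFinite _)

theorem rank_lt_rank_iff (h : IsAcycOrientK n ω) : h.rank u < h.rank v ↔ ω u v := by
  refine ⟨fun hlt => ?_, h.rank_lt_rank⟩
  by_contra hn
  rcases eq_or_ne u v with rfl | huv
  · exact lt_irrefl _ hlt
  · exact (h.rank_lt_rank (h.rel_of_not_rel huv hn)).not_gt hlt

theorem rank_bijective (h : IsAcycOrientK n ω) : Function.Bijective h.rank := by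
  refine (Fintype.bijective_iff_injective_and_card _).mpr ⟨fun u v huv => ?_, rfl⟩
  by_contra hne
  by_cases hω : ω u v
  · exact (h.rank_lt_rank hω).ne huv
  · exact (h.rank_lt_rank (h.rel_of_not_rel hne hω)).ne huv.symm

end IsAcycOrientK

def orientOfPerm {n : ℕ} (σ : Perm (Fin n)) : AcycOrient n :=
  ⟨fun u v => σ u < σ v,
    fun _ _ huv => ⟨fun h => h.not_gt, fun h => (not_lt.mp h).lt_of_ne (σ.injective.ne huv)⟩,
    fun _ => lt_irrefl _,
    fun v hv => lt_irrefl (σ v) <| by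
      simpa only [Relation.transGen_eq_self] using
        Relation.TransGen.lift (p := (· < ·)) σ (fun _ _ h => h) v v hv⟩

theorem rank_orientOfPerm {n : ℕ} (σ : Perm (Fin n)) : (orientOfPerm σ).2.rank = σ := by
  funext x
  apply Fin.ext
  change (σ ⁻¹' Set.Iio (σ x)).ncard = σ x
  rw [Set.ncard_preimage_of_injective_subset_range σ.injective (by simp)]
  simp [Set.ncard_eq_toFinset_card']

noncomputable def acycOrientEquivPerm (n : ℕ) : AcycOrient n ≃ Perm (Fin n) where
  toFun ω := Equiv.ofBijective _ ω.2.rank_bijective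
  invFun := orientOfPerm
  left_inv ω := Subtype.ext <| funext₂ fun u v =>
    propext (ω.2.rank_lt_rank_iff (u := u) (v := v))
  right_inv σ := Equiv.ext <| congrFun (rank_orientOfPerm σ)

section CyclicShift

variable {n : ℕ}

theorem Fin.sub_one_lt_sub_one_iff (a b : Fin (n + 1)) :
    a - 1 < b - 1 ↔ ((a = 0 ∨ b = 0) ∧ b < a) ∨ (a ≠ 0 ∧ b ≠ 0 ∧ a < b) := by
  have ha := Fin.coe_sub_one a
  have hb := Fin.coe_sub_one b
  simp only [Fin.lt_def, Fin.ext_iff, Fin.val_zero, ne_eq] at ha hb ⊢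
  split_ifs at ha hb <;> omega

def cycShift (σ : Perm (Fin (n + 1))) : Perm (Fin (n + 1)) :=
  σ.trans (Equiv.subRight 1)

theorem sourceToSinkStep_orientOfPerm_iff (σ : Perm (Fin (n + 1))) (ω' : AcycOrient (n + 1)) :
    SourceToSinkStep (n + 1) (orientOfPerm σ) ω' ↔ ω' = orientOfPerm (cycShift σ) := by
  have hshift : ∀ s, σ s = 0 → ∀ u v, (orientOfPerm (cycShift σ)).1 u v ↔
      ((u = s ∨ v = s) ∧ σ v < σ u) ∨ (u ≠ s ∧ v ≠ s ∧ σ u < σ v) := by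
    intro s hs u v
    have hu : u = s ↔ σ u = 0 := by rw [← hs, σ.injective.eq_iff]
    have hv : v = s ↔ σ v = 0 := by rw [← hs, σ.injective.eq_iff]
    simp only [ne_eq, hu, hv]
    exact Fin.sub_one_lt_sub_one_iff (σ u) (σ v)
  constructor
  · rintro ⟨s, hsource, hstep⟩
    have hs : σ s = 0 := by
      simpa [orientOfPerm, Fin.pos_iff_ne_zero] using hsource (σ.symm 0)
    exact Subtype.ext <| funext₂ fun u v => propext ((hstep u v).trans (hshift s hs u v).symm)
  · rintro rfl
    refine ⟨σ.symm 0, fun v => ?_, hshift _ (σ.apply_symm_apply 0)⟩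
    simp [orientOfPerm]

theorem sourceToSinkStep_iff (ω ω' : AcycOrient (n + 1)) :
    SourceToSinkStep (n + 1) ω ω' ↔
      acycOrientEquivPerm (n + 1) ω' = cycShift (acycOrientEquivPerm (n + 1) ω) := by
  obtain ⟨σ, rfl⟩ := (acycOrientEquivPerm (n + 1)).symm.surjective ω
  rw [Equiv.apply_symm_apply, ← Equiv.eq_symm_apply]
  exact sourceToSinkStep_orientOfPerm_iff σ ω'

def CycShiftRel (σ τ : Perm (Fin (n + 1))) : Prop := τ = cycShift σ

theorem quot_mk_trans_subRight (σ : Perm (Fin (n + 1))) (a : Fin (n + 1)) :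
    Quot.mk CycShiftRel (σ.trans (Equiv.subRight a)) = Quot.mk CycShiftRel σ := by
  induction a using Fin.induction with
  | zero => congr; ext; simp
  | succ a ih =>
    rw [← ih]
    refine (Quot.sound (show CycShiftRel _ _ from Equiv.ext fun x => ?_)).symm
    simp [cycShift, ← Fin.coeSucc_eq_succ, sub_sub]

def normalizeAtZero (σ : Perm (Fin (n + 1))) : Perm (Fin (n + 1)) :=
  σ.trans (Equiv.subRight (σ 0))

theorem normalizeAtZero_cycShift (σ : Perm (Fin (n + 1))) :
    normalizeAtZero (cycShift σ) = normalizeAtZero σ :=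
  Equiv.ext fun x => sub_sub_sub_cancel_right (σ x) (σ 0) 1

def quotCycShiftEquiv :
    Quot (CycShiftRel (n := n)) ≃ {τ : Perm (Fin (n + 1)) // τ 0 = 0} where
  toFun := Quot.lift (fun σ => ⟨normalizeAtZero σ, sub_self (σ 0)⟩) <| by
    rintro σ _ rfl
    exact Subtype.ext (normalizeAtZero_cycShift σ).symm
  invFun τ := Quot.mk _ τ.1
  left_inv := Quot.ind fun σ => quot_mk_trans_subRight σ (σ 0)
  right_inv τ := Subtype.ext <| Equiv.ext fun x => by simp [normalizeAtZero, τ.2]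

theorem card_perm_apply_zero_eq_zero :
    Nat.card {τ : Perm (Fin (n + 1)) // τ 0 = 0} = n.factorial := by
  have hzero (τ : Perm (Fin (n + 1))) : τ 0 = 0 ↔ (Perm.decomposeFin τ).1 = 0 := by
    conv_lhs => rw [← Perm.decomposeFin.symm_apply_apply τ]
    rw [Perm.decomposeFin_symm_apply_zero]
  rw [Nat.card_congr <|
    (Perm.decomposeFin.subtypeEquiv (p := (· 0 = 0)) (q := fun c => c.1 = 0) hzero).trans
      (prodSubtypeFstEquivSubtypeProd (p := (· = 0)))]
  simp [Fintype.card_perm]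

end CyclicShift

theorem stmt_8_general (n : ℕ) :
    Nat.card (Quot (SourceToSinkStep n)) = (n - 1).factorial := by
  cases n with
  | zero =>
    have : Subsingleton (AcycOrient 0) := (acycOrientEquivPerm 0).subsingleton
    exact Nat.card_eq_one_iff_unique.mpr
      ⟨inferInstance, ⟨Quot.mk _ ((acycOrientEquivPerm 0).symm 1)⟩⟩
  | succ m =>
    rw [Nat.card_congr ((Quot.congr _ sourceToSinkStep_iff).trans quotCycShiftEquiv),
      card_perm_apply_zero_eq_zero, Nat.add_sub_cancel]

/-- The toric equivalence classes of acyclic orientations of `K_n` — where two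
orientations are equivalent when one is obtained from the other by a sequence of
source-to-sink conversions — number exactly `(n-1)!`. -/
theorem stmt_8 (n : ℕ) (hn : 1 ≤ n) :
    Nat.card (Quot (SourceToSinkStep n)) = (n - 1).factorial :=
  stmt_8_general n
end

section
/- If two reduced words w and w' for the same element of a Coxeter group differ by a single swap of adjacent commuting generators (a short braid relation), then their heaps H(w) and H(w') are isomorphic as labeled posets, via the transposition of the two swapped positions. -/
/-!
The transposition of adjacent positions `a ⋖ b` preserves the integer order of every pair
of positions except `(a, b)`, and that pair is not a generating relation of the heap because
its letters commute. So the transposition maps generating relations of the heap of `x` to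
generating relations of the heap of the swapped word; since it is an involution, applying
this to the swapped word gives the converse.
-/

/-- The heap (partial) order of the word `x : Fin m → B` over the Coxeter matrix
`M` : the reflexive-transitive closure of the relations `i ≺ j` for integer-ordered
positions `i < j` whose letters do not commute (`M (x i) (x j) ≠ 2`). -/
def heapLe {B : Type*} (M : CoxeterMatrix B) {m : ℕ} (x : Fin m → B) :
    Fin m → Fin m → Prop :=
  Relation.ReflTransGen (fun i j => i < j ∧ M (x i) (x j) ≠ 2)

open Equiv

theorem Equiv.swap_lt_swap_of_covBy {α : Type*} [LinearOrder α] {a b p q : α} (hab : a ⋖ b)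
    (hpq : p < q) (hne : ¬(p = a ∧ q = b)) : swap a b p < swap a b q := by
  have hq : p = a → b < q := fun hp =>
    (hab.ge_of_gt (hp ▸ hpq)).lt_of_ne fun hq => hne ⟨hp, hq.symm⟩
  have hp : q = b → p < a := fun hq =>
    (hab.le_of_lt (hq ▸ hpq)).lt_of_ne fun hp => hne ⟨hp, hq⟩
  simp only [swap_apply_def]
  split_ifs <;> subst_vars <;> grind [hab.lt]

theorem heapLe.comp_swap {B : Type*} {M : CoxeterMatrix B} {m : ℕ} {x : Fin m → B}
    {a b : Fin m} (hab : a ⋖ b) (hcomm : M (x a) (x b) = 2) {i j : Fin m}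
    (h : heapLe M x i j) : heapLe M (x ∘ swap a b) (swap a b i) (swap a b j) := by
  refine Relation.ReflTransGen.lift (swap a b) (fun p q ⟨hpq, hM⟩ => ⟨?_, ?_⟩) i j h
  · exact swap_lt_swap_of_covBy hab hpq fun ⟨hp, hq⟩ => hM (hp ▸ hq ▸ hcomm)
  · simpa using hM

theorem stmt_11_general {B : Type*} {M : CoxeterMatrix B}
    {m : ℕ} (x : Fin m → B) (a b : Fin m)
    (hab : (a : ℕ) + 1 = (b : ℕ))
    (hcomm : M (x a) (x b) = 2) :
    (∀ i, (x ∘ Equiv.swap a b) (Equiv.swap a b i) = x i) ∧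
      (∀ i j, heapLe M x i j ↔
        heapLe M (x ∘ Equiv.swap a b) (Equiv.swap a b i) (Equiv.swap a b j)) := by
  have hcov : a ⋖ b := Fin.covBy_iff.2 (Nat.covBy_iff_add_one_eq.2 hab)
  have hcomm' : M ((x ∘ swap a b) a) ((x ∘ swap a b) b) = 2 := by
    simpa [M.symmetric (x b)] using hcomm
  refine ⟨fun i => by simp, fun i j => ⟨heapLe.comp_swap hcov hcomm, fun h => ?_⟩⟩
  have hx : (x ∘ swap a b) ∘ swap a b = x := funext fun i => by simp
  simpa only [hx, swap_apply_self] using heapLe.comp_swap hcov hcomm' h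

/-- If two reduced words for the same element of a Coxeter group differ by a single
swap of adjacent commuting generators (a short braid relation), then their heaps are
isomorphic as labeled posets, via the transposition of the two swapped positions:
the transposition preserves labels and is an order isomorphism of the heap posets. -/
theorem stmt_11 {B W : Type*} [DecidableEq B] [Group W] {M : CoxeterMatrix B}
    (cs : CoxeterSystem M W) {m : ℕ} (x : Fin m → B) (a b : Fin m)
    (hab : (a : ℕ) + 1 = (b : ℕ))
    (hcomm : M (x a) (x b) = 2)
    (hred : cs.IsReduced (List.ofFn x))
    (hred' : cs.IsReduced (List.ofFn (x ∘ Equiv.swap a b)))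
    (hsame : cs.wordProd (List.ofFn x) = cs.wordProd (List.ofFn (x ∘ Equiv.swap a b))) :
    (∀ i, (x ∘ Equiv.swap a b) (Equiv.swap a b i) = x i) ∧
      (∀ i j, heapLe M x i j ↔
        heapLe M (x ∘ Equiv.swap a b) (Equiv.swap a b i) (Equiv.swap a b j)) :=
  stmt_11_general x a b hab hcomm
end

section
/- If an element w of a Coxeter group W admits a decomposition w = w_I · n_I where w_I ≠ 1 lies in a finite standard parabolic subgroup W_I and n_I normalizes W_I, then w is not logarithmic: there exists k ≥ 1 with ℓ(w^k) < k · ℓ(w). -/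
/-!
Since `n` normalizes `W_I`, the elements `w^k n^{-k}` all lie in the finite group `W_I`,
so two of them coincide: `w^(a+d) = w^a n^d` for some `d ≥ 1`. As `ℓ(n) < ℓ(w)` (because
`w_I ≠ 1` and the decomposition is reduced), subadditivity of `ℓ` gives
`ℓ(w^(a+d)) ≤ a ℓ(w) + d ℓ(n) < (a+d) ℓ(w)`.
-/

namespace Subgroup

variable {G : Type*} [Group G] {H : Subgroup G} {u n : G}

theorem mul_pow_mul_inv_pow_mem (hu : u ∈ H) (hn : n ∈ normalizer (H : Set G)) (k : ℕ) :
    (u * n) ^ k * (n ^ k)⁻¹ ∈ H := by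
  induction k with
  | zero => simp
  | succ k ih =>
    have hconj : n ^ k * u * (n ^ k)⁻¹ ∈ H :=
      (mem_normalizer_iff.mp (pow_mem hn k) u).mp hu
    have hsplit : (u * n) ^ (k + 1) * (n ^ (k + 1))⁻¹ =
        (u * n) ^ k * (n ^ k)⁻¹ * (n ^ k * u * (n ^ k)⁻¹) := by
      simp only [pow_succ, mul_inv_rev, mul_assoc, mul_inv_cancel_left, inv_mul_cancel_left]
    rw [hsplit]
    exact H.mul_mem ih hconj

theorem exists_mul_pow_eq_mul_pow_mul_pow [Finite H] (hu : u ∈ H)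
    (hn : n ∈ normalizer (H : Set G)) :
    ∃ a d : ℕ, 1 ≤ d ∧ (u * n) ^ (a + d) = (u * n) ^ a * n ^ d := by
  have of_lt : ∀ a b : ℕ, a < b → (u * n) ^ a * (n ^ a)⁻¹ = (u * n) ^ b * (n ^ b)⁻¹ →
      ∃ a d : ℕ, 1 ≤ d ∧ (u * n) ^ (a + d) = (u * n) ^ a * n ^ d := by
    intro a b hab heq
    obtain ⟨d, rfl⟩ := Nat.exists_eq_add_of_lt hab
    refine ⟨a, d + 1, by omega, ?_⟩
    rw [← add_assoc, mul_inv_eq_iff_eq_mul.mp heq.symm, add_assoc, pow_add n a, mul_assoc,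
      inv_mul_cancel_left]
  obtain ⟨a, b, hab, hfab⟩ := Finite.exists_ne_map_eq_of_infinite
    (fun k : ℕ => (⟨(u * n) ^ k * (n ^ k)⁻¹, mul_pow_mul_inv_pow_mem hu hn k⟩ : H))
  have heq : (u * n) ^ a * (n ^ a)⁻¹ = (u * n) ^ b * (n ^ b)⁻¹ := congrArg Subtype.val hfab
  rcases hab.lt_or_gt with hlt | hgt
  · exact of_lt a b hlt heq
  · exact of_lt b a hgt heq.symm

end Subgroup

namespace CoxeterSystem

variable {B W : Type*} [Group W] {M : CoxeterMatrix B} (cs : CoxeterSystem M W)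

theorem length_pow_le (w : W) (k : ℕ) : cs.length (w ^ k) ≤ k * cs.length w := by
  induction k with
  | zero => simp
  | succ k ih =>
    rw [pow_succ, add_mul, one_mul]
    exact (cs.length_mul_le _ _).trans (Nat.add_le_add_right ih _)

end CoxeterSystem

/-- If an element `w` of a Coxeter group admits a reduced decomposition
`w = w_I · n_I` with `w_I ≠ 1` lying in a finite standard parabolic subgroup `W_I`
and `n_I` normalizing `W_I`, then `w` is not logarithmic: there is `k ≥ 1` with
`ℓ(w^k) < k·ℓ(w)`. -/
theorem stmt_16 {B W : Type*} [Group W] {M : CoxeterMatrix B}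
    (cs : CoxeterSystem M W) (I : Set B) (w wI nI : W)
    (hfin : Finite (Subgroup.closure (cs.simple '' I) : Subgroup W))
    (hwI : wI ∈ Subgroup.closure (cs.simple '' I)) (hwI1 : wI ≠ 1)
    (hnI : nI ∈ Subgroup.normalizer ((Subgroup.closure (cs.simple '' I) : Subgroup W) : Set W))
    (hw : w = wI * nI)
    (hlen : cs.length w = cs.length wI + cs.length nI) :
    ∃ k : ℕ, 1 ≤ k ∧ cs.length (w ^ k) < k * cs.length w := by
  obtain ⟨a, d, hd, hpow⟩ := Subgroup.exists_mul_pow_eq_mul_pow_mul_pow hwI hnI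
  have hshorter : cs.length nI < cs.length w := by
    have : cs.length wI ≠ 0 := fun h => hwI1 (cs.length_eq_zero_iff.mp h)
    omega
  refine ⟨a + d, by omega, ?_⟩
  calc cs.length (w ^ (a + d))
      ≤ cs.length (w ^ a) + cs.length (nI ^ d) := by
        rw [hw, hpow]; exact cs.length_mul_le _ _
    _ ≤ a * cs.length w + d * cs.length nI :=
        Nat.add_le_add (cs.length_pow_le w a) (cs.length_pow_le nI d)
    _ < (a + d) * cs.length w := by
        rw [add_mul]; exact Nat.add_lt_add_left (Nat.mul_lt_mul_of_pos_left hshorter hd) _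
end

section
/- Let (W,S) be a Coxeter system whose Coxeter graph has an even endpoint s with unique neighbor t (so m(s,t) is even, and m(s,u) = 2 for all u ∉ {s,t}). If u is a word containing neither s nor t and w = ⟨s,t⟩_{m(s,t)} · u is the full word (the alternating product stst⋯ of length m(s,t) followed by u), then the cyclic word [st⋯st · u] = [w] can be transformed into [ts⋯ts · u], the cyclic word obtained by applying the long braid relation ⟨s,t⟩_{m(s,t)} → ⟨t,s⟩_{m(s,t)}, using only cyclic shifts and swaps of adjacent commuting generators. -/
/-- One commutation move: swap two adjacent letters that commute (`M a b = 2`). -/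
def CommStep {B : Type*} (M : CoxeterMatrix B) (l l' : List B) : Prop :=
  ∃ (p q : List B) (a b : B), M a b = 2 ∧
    l = p ++ [a, b] ++ q ∧ l' = p ++ [b, a] ++ q

/-- One cyclic shift (first letter moved to the end) or commutation move. -/
def CyclicOrCommStep {B : Type*} (M : CoxeterMatrix B) (l l' : List B) : Prop :=
  l' = l.rotate 1 ∨ CommStep M l l'

/-- Move a letter `s` commuting with every letter of `u` from the end of `u` to its front. -/
theorem comm_through {B : Type*} (M : CoxeterMatrix B) (s : B)
    (u : List B) (hu : ∀ x ∈ u, M x s = 2) (p : List B) :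
    Relation.EqvGen (CyclicOrCommStep M) (p ++ u ++ [s]) (p ++ s :: u) := by
  induction u generalizing p with
  | nil => simp only [List.append_nil]; exact Relation.EqvGen.refl _
  | cons x u' ih =>
    have h1 : Relation.EqvGen (CyclicOrCommStep M)
        ((p ++ [x]) ++ u' ++ [s]) ((p ++ [x]) ++ s :: u') :=
      ih (fun y hy => hu y (List.mem_cons_of_mem _ hy)) (p ++ [x])
    have h2 : CyclicOrCommStep M (p ++ [x, s] ++ u') (p ++ [s, x] ++ u') :=
      Or.inr ⟨p, u', x, s, hu x List.mem_cons_self, rfl, rfl⟩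
    have e1 : (p ++ [x]) ++ u' ++ [s] = p ++ (x :: u') ++ [s] := by simp
    have e2 : (p ++ [x]) ++ s :: u' = p ++ [x, s] ++ u' := by simp
    have e3 : p ++ [s, x] ++ u' = p ++ s :: x :: u' := by simp
    rw [e1, e2] at h1
    exact Relation.EqvGen.trans _ _ _ h1 (e3 ▸ Relation.EqvGen.rel _ _ h2)

/-- Let `s` be an even endpoint of the Coxeter graph, with unique neighbor `t`
(so `m(s,t)` is even and `s` commutes with every generator other than `t`), and let
`u` be a word containing neither `s` nor `t`.  Then the word
`⟨s,t⟩_{m(s,t)} · u` can be transformed into `⟨t,s⟩_{m(s,t)} · u` using only cyclic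
shifts and swaps of adjacent commuting generators; i.e., the two cyclic words differ
only by commutation relations and cyclic shifts. -/
theorem stmt_18 {B : Type*} (M : CoxeterMatrix B) (s t : B) (hst : s ≠ t)
    (heven : Even (M s t))
    (hendpoint : ∀ x : B, x ≠ s → x ≠ t → M s x = 2)
    (u : List B) (hs : s ∉ u) (ht : t ∉ u) :
    Relation.EqvGen (CyclicOrCommStep M)
      (CoxeterSystem.alternatingWord s t (M s t) ++ u)
      (CoxeterSystem.alternatingWord t s (M s t) ++ u) := by
  rcases Nat.eq_zero_or_pos (M s t) with h0 | hpos
  · rw [h0]; exact Relation.EqvGen.refl _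
  obtain ⟨k, hk⟩ := Nat.exists_eq_add_of_lt hpos
  rw [zero_add] at hk
  have hkodd : ¬ Even k := by
    intro h; rw [hk] at heven; exact (Nat.even_add_one.mp heven) h
  have hhead : CoxeterSystem.alternatingWord s t (M s t)
      = s :: CoxeterSystem.alternatingWord s t k := by
    rw [hk, CoxeterSystem.alternatingWord_succ', if_neg hkodd]
  have htail : CoxeterSystem.alternatingWord t s (M s t)
      = CoxeterSystem.alternatingWord s t k ++ [s] := by
    rw [hk, CoxeterSystem.alternatingWord_succ, List.concat_eq_append]
  -- step 1: rotate
  set A := CoxeterSystem.alternatingWord s t k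
  have step1 : CyclicOrCommStep M (s :: (A ++ u)) ((A ++ u) ++ [s]) := by
    left; rw [List.rotate_cons_succ, List.rotate_zero]
  have hu : ∀ x ∈ u, M x s = 2 := by
    intro x hx
    rw [M.symmetric]
    exact hendpoint x (fun h => hs (h ▸ hx)) (fun h => ht (h ▸ hx))
  have step2 := comm_through M s u hu A
  have e : (s :: A) ++ u = s :: (A ++ u) := by simp
  have e2 : (A ++ u) ++ [s] = A ++ u ++ [s] := by simp
  have e3 : (A ++ [s]) ++ u = A ++ s :: u := by simp
  rw [hhead, htail, e, e3]
  exact Relation.EqvGen.trans _ _ _ (Relation.EqvGen.rel _ _ step1) (e2 ▸ step2)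
end
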